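/- Let κ ∈ ℝ_+^J with κ ≠ 0, let ν ∈ ℝ^J, and set E := {j ∈ I : κ_j = 0} (so E ≠ I). If κ − ν lies in the convex cone generated by {d_j : j ∈ E}, then Σ_{j∈E} ν_j ≤ 0. -/

import Mathlib

/-!
Apply the functional `v ↦ ∑_{j ∈ E} v_j`. On `κ - ν` it gives `-∑_{j ∈ E} ν_j`, since `κ`
vanishes on `E`. On a generator `d_k` with `k ∈ E` it gives
`1 - (∑_{j ∈ E \ {k}} β_j) / (1 - β_k) ≥ 0`, because `∑_{j ≠ k} β_j = 1 - β_k`; hence it is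
nonnegative on the whole cone.
-/

open Finset

noncomputable def gpsDirection {ι : Type*} [DecidableEq ι] (β : ι → ℝ) (i : ι) : ι → ℝ :=
  fun j => if j = i then 1 else -β j / (1 - β i)

theorem gpsDirection_sum_nonneg {ι : Type*} [Fintype ι] [DecidableEq ι] {β : ι → ℝ}
    (hβ0 : ∀ j, 0 ≤ β j) (hβsum : ∑ j, β j = 1) {k : ι} (hk : β k < 1)
    {s : Finset ι} (hks : k ∈ s) : 0 ≤ ∑ j ∈ s, gpsDirection β k j := by
  have hpos : 0 < 1 - β k := sub_pos.mpr hk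
  have hrest : ∑ j ∈ s.erase k, gpsDirection β k j = -(∑ j ∈ s.erase k, β j) / (1 - β k) := by
    rw [neg_div, Finset.sum_div, ← Finset.sum_neg_distrib]
    refine Finset.sum_congr rfl fun j hj => ?_
    rw [gpsDirection, if_neg (Finset.ne_of_mem_erase hj), neg_div]
  have hle : ∑ j ∈ s.erase k, β j ≤ 1 - β k := calc
    ∑ j ∈ s.erase k, β j ≤ ∑ j ∈ univ.erase k, β j :=
      Finset.sum_le_sum_of_subset_of_nonneg (Finset.erase_subset_erase _ (subset_univ _))
        fun j _ _ => hβ0 j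
    _ = 1 - β k := by rw [Finset.sum_erase_eq_sub (mem_univ k), hβsum]
  rw [← Finset.add_sum_erase _ _ hks, hrest, gpsDirection, if_pos rfl, neg_div,
    ← sub_eq_add_neg, sub_nonneg, div_le_one hpos]
  exact hle

theorem sum_nonneg_of_mem_cone {ι : Type*} [Fintype ι] (s : Finset ι) (d : ι → ι → ℝ)
    (a : ι → ℝ) (ha : ∀ k, 0 ≤ a k) (hsupp : ∀ k ∉ s, a k = 0)
    (hd : ∀ k ∈ s, 0 ≤ ∑ j ∈ s, d k j) : 0 ≤ ∑ j ∈ s, (∑ k, a k • d k) j := by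
  simp only [Finset.sum_apply, Pi.smul_apply, smul_eq_mul]
  rw [Finset.sum_comm]
  refine Finset.sum_nonneg fun k _ => ?_
  rw [← Finset.mul_sum]
  by_cases hk : k ∈ s
  · exact mul_nonneg (ha k) (hd k hk)
  · simp [hsupp k hk]

theorem gps_cone_membership_sum_nonpos_general
    (J : ℕ) (β : Fin J → ℝ)
    (hβ : ∀ i, 0 < β i ∧ β i < 1) (hβsum : ∑ i, β i = 1)
    (d : Fin J → Fin J → ℝ)
    (hd : ∀ i j, d i j = if j = i then 1 else -(β j) / (1 - β i))
    (κ ν : Fin J → ℝ)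
    (hcone : ∃ a : Fin J → ℝ, (∀ j, 0 ≤ a j) ∧ (∀ j, κ j ≠ 0 → a j = 0) ∧
        κ - ν = ∑ j, a j • d j) :
    ∑ j ∈ Finset.univ.filter (fun j => κ j = 0), ν j ≤ 0 := by
  obtain ⟨a, ha0, hasupp, heq⟩ := hcone
  set E := Finset.univ.filter (fun j => κ j = 0)
  have hdE : ∀ k ∈ E, 0 ≤ ∑ j ∈ E, d k j := fun k hk => by
    rw [show d k = gpsDirection β k from funext (hd k)]
    exact gpsDirection_sum_nonneg (fun j => (hβ j).1.le) hβsum (hβ k).2 hk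
  have hcone := sum_nonneg_of_mem_cone E d a ha0
    (fun k hk => hasupp k (by simpa [E] using hk)) hdE
  have hκE : ∑ j ∈ E, (κ - ν) j = -∑ j ∈ E, ν j := by
    rw [Finset.sum_congr rfl fun j hj => by
      rw [Pi.sub_apply, (Finset.mem_filter.mp hj).2, zero_sub]]
    exact Finset.sum_neg_distrib _
  rw [← heq, hκE] at hcone
  linarith

/-- let `κ ∈ ℝ_+^J`, `κ ≠ 0`, and `E = {j : κ_j = 0}`. If `κ − ν` lies in
the convex cone generated by `{d_j : j ∈ E}` (i.e. is a nonnegative combination of the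
`d_j`, `j ∈ E`), then `Σ_{j∈E} ν_j ≤ 0`. -/
theorem gps_cone_membership_sum_nonpos
    (J : ℕ) (hJ : 2 ≤ J) (β : Fin J → ℝ)
    (hβ : ∀ i, 0 < β i ∧ β i < 1) (hβsum : ∑ i, β i = 1)
    (d : Fin J → Fin J → ℝ)
    (hd : ∀ i j, d i j = if j = i then 1 else -(β j) / (1 - β i))
    (κ ν : Fin J → ℝ) (hκ : ∀ i, 0 ≤ κ i) (hκ0 : κ ≠ 0)
    (hcone : ∃ a : Fin J → ℝ, (∀ j, 0 ≤ a j) ∧ (∀ j, κ j ≠ 0 → a j = 0) ∧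
        κ - ν = ∑ j, a j • d j) :
    ∑ j ∈ Finset.univ.filter (fun j => κ j = 0), ν j ≤ 0 :=
  gps_cone_membership_sum_nonpos_general J β hβ hβsum d hd κ ν hcone
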